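/- For all integers n ≥ 13, the 2-tortoise complexity of the regular paperfolding word satisfies ρ^{t(2)}_f(n) = 4n. -/

import Mathlib

/-!
`tortoise^[2]` deletes the first two letters `1` of a word and appends `11`. Every factor of
length 13 of the paperfolding word contains two `1`s, so two factors of length `n ≥ 13` have the
same image iff their prefixes of length 13 have the same image and their remaining suffixes agree.
A finite check shows that `tortoise^[2]` is injective on the factors of length 13, hence on those
of every length `n ≥ 13`, and `ρ^{t(2)}(n) = ρ(n)`.

The factor complexity is `ρ(n) = 4n` for `n ≥ 7`: there are four right special factors of each
length `n ≥ 7`. Since `pf (2j) = (j mod 2)` and `pf (2j+1) = pf j`, a factor of length at least 7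
determines the parity of its occurrences, and the letter at an even position `2j` is fixed by
`j mod 2`, so two occurrences of a right special factor followed by different letters are both
followed by an odd position. Hence its letters at odd positions spell a right special factor of
length `⌊n/2⌋`, which gives a bijection for `n ≥ 14`. The base cases, like every statement about
short factors, are finite checks: `pf (2^K q + r)` with `r < 2^K` depends only on `r`, `q mod 2`
and `pf q`, so every factor of length at most `2^K` occurs before position `12 · 2^K`.
-/

/-- The tortoise operation on binary words: if the word contains a 1 (`true`),
delete the first occurrence of 1 and append a 1 at the right end; otherwise do nothing. -/
def tortoise (w : List Bool) : List Bool :=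
  if true ∈ w then (w.erase true) ++ [true] else w

/-- `w` is a factor (subword) of the infinite word `x`. -/
def IsFactor (x : ℕ → Bool) (w : List Bool) : Prop :=
  ∃ i, w = (List.range w.length).map (fun t => x (i + t))

/-- The set of length-`n` factors of `x`. -/
def factorSet (x : ℕ → Bool) (n : ℕ) : Set (List Bool) :=
  {w | w.length = n ∧ IsFactor x w}

/-- The factor complexity of `x`. -/
noncomputable def rho (x : ℕ → Bool) (n : ℕ) : ℕ :=
  (factorSet x n).ncard

/-- The tortoise complexity of `x`: the number of `∼ₜ`-equivalence classes of
length-`n` factors of `x`, i.e. the number of distinct images under `tortoise`. -/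
noncomputable def rhoTort (x : ℕ → Bool) (n : ℕ) : ℕ :=
  (tortoise '' factorSet x n).ncard

/-- The `k`-tortoise complexity of `x`: the number of equivalence classes of
length-`n` factors of `x` under `tortoise^[k] w = tortoise^[k] v`. -/
noncomputable def rhoTortK (k : ℕ) (x : ℕ → Bool) (n : ℕ) : ℕ :=
  ((tortoise^[k]) '' factorSet x n).ncard

/-- `y` is a left special factor of `x`: both `0y` and `1y` are factors of `x`. -/
def LeftSpecial (x : ℕ → Bool) (y : List Bool) : Prop :=
  IsFactor x (false :: y) ∧ IsFactor x (true :: y)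

/-- The Thue–Morse sequence: `tm n` is the parity of the number of 1's in the
binary expansion of `n` (`true` = 1). -/
def tm (n : ℕ) : Bool :=
  decide ((Nat.digits 2 n).sum % 2 = 1)

/-- The regular paperfolding sequence, reindexed so that `pf m = f_{m+1}`:
writing `m + 1 = n' * 2^k` with `n'` odd, `pf m = true` iff `n' ≡ 3 (mod 4)`. -/
def pf (m : ℕ) : Bool :=
  decide ((m + 1) / 2 ^ (padicValNat 2 (m + 1)) % 4 = 3)


open Set

section Tortoise

lemma tortoise_append_of_mem {p : List Bool} (hp : true ∈ p) (u : List Bool) :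
    tortoise (p ++ u) = p.erase true ++ u ++ [true] := by
  simp [tortoise, hp, List.erase_append_left _ hp]

lemma true_mem_erase_true {p : List Bool} (hp : 2 ≤ p.count true) : true ∈ p.erase true :=
  List.count_pos_iff.mp (by rw [List.count_erase_self]; omega)

lemma length_erase_true_erase_true {p : List Bool} (hp : 2 ≤ p.count true) :
    ((p.erase true).erase true).length = p.length - 2 := by
  have h₂ := true_mem_erase_true hp
  rw [List.length_erase_of_mem h₂, List.length_erase_of_mem (List.mem_of_mem_erase h₂)]
  omega

lemma tortoise_iterate_two_append {p : List Bool} (hp : 2 ≤ p.count true) (u : List Bool) :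
    tortoise^[2] (p ++ u) = (p.erase true).erase true ++ u ++ [true, true] := by
  have h₂ := true_mem_erase_true hp
  have h₁ := List.mem_of_mem_erase h₂
  change tortoise (tortoise (p ++ u)) = _
  rw [tortoise_append_of_mem h₁, List.append_assoc, tortoise_append_of_mem h₂]
  simp

lemma tortoise_iterate_two_append_inj {p p' u u' : List Bool} (hp : 2 ≤ p.count true)
    (hp' : 2 ≤ p'.count true) (hlen : p.length = p'.length)
    (h : tortoise^[2] (p ++ u) = tortoise^[2] (p' ++ u')) :
    tortoise^[2] p = tortoise^[2] p' ∧ u = u' := by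
  rw [tortoise_iterate_two_append hp, tortoise_iterate_two_append hp'] at h
  have hlen' : ((p.erase true).erase true).length = ((p'.erase true).erase true).length := by
    rw [length_erase_true_erase_true hp, length_erase_true_erase_true hp', hlen]
  obtain ⟨hpp, huu⟩ := List.append_inj (List.append_inj' h rfl).1 hlen'
  refine ⟨?_, huu⟩
  rw [← p.append_nil, ← p'.append_nil, tortoise_iterate_two_append hp,
    tortoise_iterate_two_append hp', hpp]

end Tortoise

section Factors

variable {x y : ℕ → Bool} {w : List Bool} {i j m n : ℕ}

def factorAt (x : ℕ → Bool) (i n : ℕ) : List Bool :=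
  (List.range n).map fun t => x (i + t)

@[simp]
lemma length_factorAt : (factorAt x i n).length = n := by
  simp [factorAt]

@[simp]
lemma getElem_factorAt {t : ℕ} (ht : t < (factorAt x i n).length) :
    (factorAt x i n)[t] = x (i + t) := by
  simp [factorAt]

lemma getD_factorAt {t : ℕ} (ht : t < n) : (factorAt x i n).getD t false = x (i + t) := by
  rw [List.getD_eq_getElem _ _ (by simpa), getElem_factorAt]

lemma factorAt_add : factorAt x i (m + n) = factorAt x i m ++ factorAt x (i + m) n := by
  simp [factorAt, List.range_add, add_assoc]

lemma factorAt_succ : factorAt x i (n + 1) = factorAt x i n ++ [x (i + n)] := by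
  rw [factorAt_add]
  simp [factorAt]

lemma factorAt_eq_factorAt_iff :
    factorAt x i n = factorAt y j n ↔ ∀ t < n, x (i + t) = y (j + t) := by
  simp [factorAt, List.ext_getElem_iff]

lemma factorAt_eq_append_singleton_iff {b : Bool} (hw : w.length = n) :
    factorAt x i (n + 1) = w ++ [b] ↔ factorAt x i n = w ∧ x (i + n) = b := by
  rw [factorAt_succ]
  constructor
  · intro h
    obtain ⟨h₁, h₂⟩ := List.append_inj h (by simp [hw])
    exact ⟨h₁, List.singleton_inj.mp h₂⟩
  · rintro ⟨rfl, rfl⟩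
    rfl

lemma isFactor_iff : IsFactor x w ↔ ∃ i, factorAt x i w.length = w := by
  simp only [IsFactor, factorAt, eq_comm]

lemma mem_factorSet_iff : w ∈ factorSet x n ↔ ∃ i, factorAt x i n = w := by
  constructor
  · rintro ⟨rfl, h⟩
    exact isFactor_iff.mp h
  · rintro ⟨i, rfl⟩
    exact ⟨length_factorAt, isFactor_iff.mpr ⟨i, by rw [length_factorAt]⟩⟩

lemma factorAt_mem_factorSet : factorAt x i n ∈ factorSet x n :=
  mem_factorSet_iff.mpr ⟨i, rfl⟩

lemma take_mem_factorSet (hw : w ∈ factorSet x n) (hm : m ≤ n) :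
    w.take m ∈ factorSet x m := by
  obtain ⟨i, rfl⟩ := mem_factorSet_iff.mp hw
  obtain ⟨k, rfl⟩ := Nat.exists_eq_add_of_le hm
  rw [factorAt_add, List.take_left' length_factorAt]
  exact factorAt_mem_factorSet

lemma factorSet_finite (x : ℕ → Bool) (n : ℕ) : (factorSet x n).Finite :=
  (List.finite_length_eq Bool n).subset fun _ hw => hw.1

lemma isFactor_append_singleton_iff {b : Bool} :
    IsFactor x (w ++ [b]) ↔ ∃ i, factorAt x i w.length = w ∧ x (i + w.length) = b := by
  simp only [isFactor_iff, List.length_append, List.length_singleton,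
    factorAt_eq_append_singleton_iff rfl]

lemma IsFactor.of_append_singleton {b : Bool} (h : IsFactor x (w ++ [b])) : IsFactor x w := by
  obtain ⟨i, hi, -⟩ := isFactor_append_singleton_iff.mp h
  exact isFactor_iff.mpr ⟨i, hi⟩

end Factors

section RightSpecial

variable {x : ℕ → Bool} {w : List Bool} {n : ℕ}

def RightSpecial (x : ℕ → Bool) (w : List Bool) : Prop :=
  IsFactor x (w ++ [false]) ∧ IsFactor x (w ++ [true])

def rightSpecialFactors (x : ℕ → Bool) (n : ℕ) : Set (List Bool) :=
  {w | w.length = n ∧ RightSpecial x w}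

lemma mem_rightSpecialFactors_iff : w ∈ rightSpecialFactors x n ↔
    ∃ i j, factorAt x i n = w ∧ factorAt x j n = w ∧ x (i + n) = false ∧ x (j + n) = true := by
  simp only [rightSpecialFactors, RightSpecial, mem_ofPred_eq, isFactor_append_singleton_iff]
  constructor
  · rintro ⟨rfl, ⟨i, hi, hi'⟩, ⟨j, hj, hj'⟩⟩
    exact ⟨i, j, hi, hj, hi', hj'⟩
  · rintro ⟨i, j, rfl, hj, hi', hj'⟩
    exact ⟨length_factorAt, ⟨i, by simpa using hi'⟩, ⟨j, by simpa [hj] using hj'⟩⟩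

def extendableFactors (x : ℕ → Bool) (n : ℕ) (b : Bool) : Set (List Bool) :=
  {w | w.length = n ∧ IsFactor x (w ++ [b])}

lemma factorAt_mem_extendableFactors {i : ℕ} :
    factorAt x i n ∈ extendableFactors x n (x (i + n)) :=
  ⟨length_factorAt, isFactor_append_singleton_iff.mpr ⟨i, by simp⟩⟩

lemma factorSet_succ_eq_union (x : ℕ → Bool) (n : ℕ) :
    factorSet x (n + 1) = (· ++ [false]) '' extendableFactors x n false ∪
      (· ++ [true]) '' extendableFactors x n true := by
  ext v
  constructor
  · intro hv
    obtain ⟨i, rfl⟩ := mem_factorSet_iff.mp hv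
    rw [factorAt_succ]
    cases hb : x (i + n)
    · exact Or.inl ⟨_, hb ▸ factorAt_mem_extendableFactors, rfl⟩
    · exact Or.inr ⟨_, hb ▸ factorAt_mem_extendableFactors, rfl⟩
  · rintro (⟨w, ⟨hw, hwb⟩, rfl⟩ | ⟨w, ⟨hw, hwb⟩, rfl⟩) <;> exact ⟨by simp [hw], hwb⟩

lemma extendableFactors_union (x : ℕ → Bool) (n : ℕ) :
    extendableFactors x n false ∪ extendableFactors x n true = factorSet x n := by
  ext w
  constructor
  · rintro (⟨hw, h⟩ | ⟨hw, h⟩) <;> exact ⟨hw, h.of_append_singleton⟩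
  · intro hw
    obtain ⟨i, rfl⟩ := mem_factorSet_iff.mp hw
    cases hb : x (i + n)
    · exact Or.inl (hb ▸ factorAt_mem_extendableFactors)
    · exact Or.inr (hb ▸ factorAt_mem_extendableFactors)

lemma extendableFactors_inter (x : ℕ → Bool) (n : ℕ) :
    extendableFactors x n false ∩ extendableFactors x n true = rightSpecialFactors x n := by
  ext w
  simp only [extendableFactors, rightSpecialFactors, RightSpecial, mem_inter_iff, mem_ofPred_eq]
  tauto

lemma rho_succ (x : ℕ → Bool) (n : ℕ) :
    rho x (n + 1) = rho x n + (rightSpecialFactors x n).ncard := by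
  have hfin (b : Bool) : (extendableFactors x n b).Finite :=
    (factorSet_finite x n).subset fun _ hw => ⟨hw.1, hw.2.of_append_singleton⟩
  have happend_inj (b : Bool) : InjOn (· ++ [b]) (extendableFactors x n b) :=
    fun _ _ _ _ h => List.append_cancel_right h
  have hdisj : Disjoint ((· ++ [false]) '' extendableFactors x n false)
      ((· ++ [true]) '' extendableFactors x n true) := by
    rw [Set.disjoint_left]
    rintro _ ⟨w, -, rfl⟩ ⟨w', -, h⟩
    simpa using (List.append_inj' h rfl).2
  rw [rho, rho, factorSet_succ_eq_union, ncard_union_eq hdisj ((hfin _).image _) ((hfin _).image _),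
    (happend_inj _).ncard_image, (happend_inj _).ncard_image, ← extendableFactors_union,
    ← extendableFactors_inter, ncard_union_add_ncard_inter _ _ (hfin _) (hfin _)]

end RightSpecial

section Paperfolding

variable {e e' i n K : ℕ}

lemma pf_two_mul (j : ℕ) : pf (2 * j) = decide (j % 2 = 1) := by
  have h : padicValNat 2 (2 * j + 1) = 0 := padicValNat.eq_zero_of_not_dvd (by omega)
  simp only [pf, h, pow_zero, Nat.div_one]
  exact decide_eq_decide.mpr (by omega)

lemma pf_two_mul_add_one (j : ℕ) : pf (2 * j + 1) = pf j := by
  have h : padicValNat 2 (2 * (j + 1)) = 1 + padicValNat 2 (j + 1) := by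
    rw [padicValNat.mul (by omega) (by omega), padicValNat.self (by omega)]
  simp only [pf, show 2 * j + 1 + 1 = 2 * (j + 1) by ring, h]
  rw [pow_add, pow_one, ← Nat.div_div_eq_div_mul, Nat.mul_div_cancel_left _ two_pos]

lemma pf_of_even (he : e % 2 = 0) : pf e = decide (e / 2 % 2 = 1) := by
  rw [← pf_two_mul, Nat.mul_div_cancel' (Nat.dvd_of_mod_eq_zero he)]

lemma pf_of_odd (he : e % 2 = 1) : pf e = pf (e / 2) := by
  rw [← pf_two_mul_add_one (e / 2), Nat.two_mul_div_two_add_one_of_odd (Nat.odd_iff.mpr he)]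

lemma pf_eq_pf_iff_of_even (he : e % 2 = 0) (he' : e' % 2 = 0) :
    pf e = pf e' ↔ e % 4 = e' % 4 := by
  rw [pf_of_even he, pf_of_even he', decide_eq_decide]
  omega

/-- A structurally recursive form of `pf`, which the kernel can evaluate;
it agrees with `pf` below `2 ^ k`. -/
def pfFuel : ℕ → ℕ → Bool
  | 0, _ => false
  | k + 1, m => if m % 2 = 0 then decide (m / 2 % 2 = 1) else pfFuel k (m / 2)

lemma pfFuel_eq_pf {k m : ℕ} (hm : m < 2 ^ k) : pfFuel k m = pf m := by
  induction k generalizing m with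
  | zero =>
    obtain rfl : m = 0 := by simpa using hm
    simpa [pfFuel] using (pf_two_mul 0).symm
  | succ k ih =>
    rw [pfFuel]
    split_ifs with h
    · rw [pf_of_even h]
    · rw [pf_of_odd (by omega), ih (by rw [pow_succ] at hm; omega)]

lemma factorAt_pfFuel {k : ℕ} (h : i + n ≤ 2 ^ k) : factorAt (pfFuel k) i n = factorAt pf i n :=
  factorAt_eq_factorAt_iff.mpr fun _ ht => pfFuel_eq_pf (by omega)

lemma pf_two_pow_mul_add_congr {q q' x : ℕ} (hx : x < 2 ^ K) (hq : q % 2 = q' % 2)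
    (hpf : pf q = pf q') : pf (2 ^ K * q + x) = pf (2 ^ K * q' + x) := by
  induction K generalizing x with
  | zero =>
    obtain rfl : x = 0 := by simpa using hx
    simpa using hpf
  | succ K ih =>
    obtain ⟨y, rfl | rfl⟩ := Nat.even_or_odd' x
    · have hmod : 2 ^ K * q % 2 = 2 ^ K * q' % 2 := by rw [Nat.mul_mod, hq, ← Nat.mul_mod]
      rw [pow_succ, mul_comm _ 2, mul_assoc, mul_assoc, ← mul_add, ← mul_add, pf_two_mul,
        pf_two_mul, Nat.add_mod, hmod, ← Nat.add_mod]
    · rw [pow_succ, mul_comm _ 2, mul_assoc, mul_assoc, ← add_assoc, ← add_assoc, ← mul_add,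
        ← mul_add, pf_two_mul_add_one, pf_two_mul_add_one]
      exact ih (by rw [pow_succ] at hx; omega)

lemma factorAt_pf_two_pow_mul_add_congr {q q' r : ℕ} (hrn : r + n ≤ 2 ^ (K + 1))
    (hq : q % 2 = q' % 2) (h₀ : pf q = pf q') (h₁ : pf (q + 1) = pf (q' + 1)) :
    factorAt pf (2 ^ K * q + r) n = factorAt pf (2 ^ K * q' + r) n := by
  refine factorAt_eq_factorAt_iff.mpr fun t ht => ?_
  by_cases hc : r + t < 2 ^ K
  · rw [add_assoc, add_assoc]
    exact pf_two_pow_mul_add_congr hc hq h₀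
  · have hshift (q : ℕ) : 2 ^ K * q + r + t = 2 ^ K * (q + 1) + (r + t - 2 ^ K) := by
      rw [mul_add]
      omega
    rw [hshift, hshift]
    exact pf_two_pow_mul_add_congr (by rw [pow_succ] at hrn; omega) (by omega) h₁

lemma exists_lt_twelve_pf_congr (q : ℕ) :
    ∃ q' < 12, q' % 2 = q % 2 ∧ pf q' = pf q ∧ pf (q' + 1) = pf (q + 1) := by
  have hsample : ∀ b p₀ p₁ : Bool, ∃ q' < 12,
      decide (q' % 2 = 1) = b ∧ pfFuel 4 q' = p₀ ∧ pfFuel 4 (q' + 1) = p₁ := by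
    decide +kernel
  obtain ⟨q', hq', hb, h₀, h₁⟩ := hsample (decide (q % 2 = 1)) (pf q) (pf (q + 1))
  rw [decide_eq_decide] at hb
  rw [pfFuel_eq_pf (by norm_num; omega)] at h₀ h₁
  exact ⟨q', hq', by omega, h₀, h₁⟩

lemma exists_factorAt_pf_eq_of_lt (hn : n ≤ 2 ^ K) (i : ℕ) :
    ∃ i' < 12 * 2 ^ K, i' % 2 ^ K = i % 2 ^ K ∧ factorAt pf i' n = factorAt pf i n := by
  obtain ⟨q', hq', h₂, h₀, h₁⟩ := exists_lt_twelve_pf_congr (i / 2 ^ K)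
  have hr : i % 2 ^ K < 2 ^ K := Nat.mod_lt i (by positivity)
  refine ⟨2 ^ K * q' + i % 2 ^ K, by nlinarith, by rw [Nat.mul_add_mod, Nat.mod_mod], ?_⟩
  conv_rhs => rw [← Nat.div_add_mod i (2 ^ K)]
  exact factorAt_pf_two_pow_mul_add_congr (by rw [pow_succ]; omega) h₂ h₀ h₁

def pfFactors (K n : ℕ) : Finset (List Bool) :=
  (Finset.range (12 * 2 ^ K)).image fun i => factorAt (pfFuel (K + 4)) i n

lemma factorSet_pf_eq_pfFactors (hn : n ≤ 2 ^ K) : factorSet pf n = pfFactors K n := by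
  have hfuel {i : ℕ} (hi : i < 12 * 2 ^ K) : factorAt (pfFuel (K + 4)) i n = factorAt pf i n :=
    factorAt_pfFuel (by rw [pow_add]; omega)
  ext w
  simp only [pfFactors, Finset.coe_image, Finset.coe_range, mem_image, mem_Iio,
    mem_factorSet_iff]
  constructor
  · rintro ⟨i, rfl⟩
    obtain ⟨i', hi', -, h⟩ := exists_factorAt_pf_eq_of_lt hn i
    exact ⟨i', hi', by rw [hfuel hi', h]⟩
  · rintro ⟨i, hi, rfl⟩
    exact ⟨i, (hfuel hi).symm⟩

end Paperfolding

section Desubstitution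

variable {i j n : ℕ} {w : List Bool}

lemma mod_two_eq_of_factorAt_pf_eq (hn : 7 ≤ n) (h : factorAt pf i n = factorAt pf j n) :
    i % 2 = j % 2 := by
  have hcheck : ∀ a < 96, ∀ b < 96,
      factorAt (pfFuel 7) a 7 = factorAt (pfFuel 7) b 7 → a % 2 = b % 2 := by
    decide +kernel
  have h₇ : factorAt pf i 7 = factorAt pf j 7 := by
    obtain ⟨k, rfl⟩ := Nat.exists_eq_add_of_le hn
    rw [factorAt_add, factorAt_add] at h
    exact (List.append_inj h (by simp)).1
  obtain ⟨a, ha, hai, ha'⟩ := exists_factorAt_pf_eq_of_lt (n := 7) (K := 3) (by norm_num) i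
  obtain ⟨b, hb, hbj, hb'⟩ := exists_factorAt_pf_eq_of_lt (n := 7) (K := 3) (by norm_num) j
  norm_num at ha hb hai hbj
  have hab := hcheck a ha b hb <| by
    rw [factorAt_pfFuel (by omega), factorAt_pfFuel (by omega), ha', hb', h₇]
  omega

lemma add_mod_two_eq_one_of_pf_ne (hn : 7 ≤ n) (h : factorAt pf i n = factorAt pf j n)
    (hne : pf (i + n) ≠ pf (j + n)) : (i + n) % 2 = 1 := by
  have hij := mod_two_eq_of_factorAt_pf_eq hn h
  by_contra heven
  have hs := factorAt_eq_factorAt_iff.mp h (i % 2) (by omega)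
  rw [pf_eq_pf_iff_of_even (by omega) (by omega)] at hs
  exact hne ((pf_eq_pf_iff_of_even (by omega) (by omega)).mpr (by omega))

lemma exists_odd_occurrences_of_mem_rightSpecialFactors_pf (hn : 7 ≤ n)
    (hw : w ∈ rightSpecialFactors pf n) : ∃ i j, factorAt pf i n = w ∧ factorAt pf j n = w ∧
      pf (i + n) = false ∧ pf (j + n) = true ∧ (i + n) % 2 = 1 ∧ (j + n) % 2 = 1 := by
  obtain ⟨i, j, hi, hj, hi₀, hj₁⟩ := mem_rightSpecialFactors_iff.mp hw
  have hne : pf (i + n) ≠ pf (j + n) := by simp [hi₀, hj₁]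
  exact ⟨i, j, hi, hj, hi₀, hj₁, add_mod_two_eq_one_of_pf_ne hn (hi.trans hj.symm) hne,
    add_mod_two_eq_one_of_pf_ne hn (hj.trans hi.symm) hne.symm⟩

/-- The letters of `w` at positions `|w| - 2, |w| - 4, …`. At an occurrence of a right special
factor of `pf` these are the letters at odd positions, which spell a factor again. -/
def decimate (w : List Bool) : List Bool :=
  (List.range (w.length / 2)).map fun k => w.getD (w.length % 2 + 2 * k) false

lemma decimate_factorAt_pf (h : (i + n) % 2 = 1) :
    decimate (factorAt pf i n) = factorAt pf (i / 2) (n / 2) := by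
  refine List.ext_getElem (by simp [decimate]) fun k hk _ => ?_
  simp only [decimate, length_factorAt, List.length_map, List.length_range] at hk
  simp only [decimate, length_factorAt, List.getElem_map, List.getElem_range, getElem_factorAt,
    getD_factorAt (show n % 2 + 2 * k < n by omega)]
  rw [pf_of_odd (e := i + (n % 2 + 2 * k)) (by omega)]
  congr 1
  omega

lemma factorAt_pf_eq_of_decimate_eq (hi : (i + n) % 2 = 1) (hj : (j + n) % 2 = 1)
    (hq : i / 2 % 2 = j / 2 % 2) (h : factorAt pf (i / 2) (n / 2) = factorAt pf (j / 2) (n / 2)) :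
    factorAt pf i n = factorAt pf j n := by
  refine factorAt_eq_factorAt_iff.mpr fun t ht => ?_
  rcases Nat.mod_two_eq_zero_or_one (i + t) with he | ho
  · exact (pf_eq_pf_iff_of_even he (by omega)).mpr (by omega)
  · have ht' := factorAt_eq_factorAt_iff.mp h ((i + t) / 2 - i / 2) (by omega)
    rw [pf_of_odd ho, pf_of_odd (e := j + t) (by omega)]
    convert ht' using 2 <;> omega

lemma pf_add_eq_of_odd (h : (i + n) % 2 = 1) : pf (i + n) = pf (i / 2 + n / 2) := by
  rw [pf_of_odd h]
  congr 1
  omega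

lemma ncard_rightSpecialFactors_pf_half (hn : 14 ≤ n) :
    (rightSpecialFactors pf n).ncard = (rightSpecialFactors pf (n / 2)).ncard := by
  refine ncard_congr (fun w _ => decimate w) ?_ ?_ ?_
  · intro w hw
    obtain ⟨i, j, rfl, hj, hi₀, hj₁, hi, hj'⟩ :=
      exists_odd_occurrences_of_mem_rightSpecialFactors_pf (by omega) hw
    refine mem_rightSpecialFactors_iff.mpr ⟨i / 2, j / 2, ?_, ?_, ?_, ?_⟩
    · exact (decimate_factorAt_pf hi).symm
    · rw [← hj, decimate_factorAt_pf hj']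
    · rw [← pf_add_eq_of_odd hi, hi₀]
    · rw [← pf_add_eq_of_odd hj', hj₁]
  · intro w w' hw hw' heq
    obtain ⟨i, -, rfl, -, -, -, hi, -⟩ :=
      exists_odd_occurrences_of_mem_rightSpecialFactors_pf (by omega) hw
    obtain ⟨i', -, rfl, -, -, -, hi', -⟩ :=
      exists_odd_occurrences_of_mem_rightSpecialFactors_pf (by omega) hw'
    simp only [decimate_factorAt_pf hi, decimate_factorAt_pf hi'] at heq
    exact factorAt_pf_eq_of_decimate_eq hi hi' (mod_two_eq_of_factorAt_pf_eq (by omega) heq) heq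
  · intro v hv
    obtain ⟨a, b, rfl, hb, ha₀, hb₁⟩ := mem_rightSpecialFactors_iff.mp hv
    have hab := mod_two_eq_of_factorAt_pf_eq (by omega) hb
    have hi : (2 * a + 1 - n % 2 + n) % 2 = 1 := by omega
    have hj : (2 * b + 1 - n % 2 + n) % 2 = 1 := by omega
    have hia : (2 * a + 1 - n % 2) / 2 = a := by omega
    have hjb : (2 * b + 1 - n % 2) / 2 = b := by omega
    have hij := factorAt_pf_eq_of_decimate_eq hi hj (by omega) (by rw [hia, hjb, hb])
    refine ⟨_, mem_rightSpecialFactors_iff.mpr ⟨_, _, rfl, hij.symm, ?_, ?_⟩, ?_⟩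
    · rw [pf_add_eq_of_odd hi, hia, ha₀]
    · rw [pf_add_eq_of_odd hj, hjb, hb₁]
    · rw [decimate_factorAt_pf hi, hia]

end Desubstitution

lemma card_pfFactors_four_of_mem_Icc : ∀ n ∈ Finset.Icc 7 14, (pfFactors 4 n).card = 4 * n := by
  decide +kernel

theorem rho_pf {n : ℕ} (hn : 7 ≤ n) : rho pf n = 4 * n := by
  induction n using Nat.strong_induction_on with
  | _ n ih =>
    rcases le_or_gt n 14 with hle | hgt
    · rw [rho, factorSet_pf_eq_pfFactors (K := 4) (by norm_num; omega), ncard_coe_finset]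
      exact card_pfFactors_four_of_mem_Icc n (Finset.mem_Icc.mpr ⟨hn, hle⟩)
    · obtain ⟨m, rfl⟩ : ∃ m, n = m + 1 := ⟨n - 1, by omega⟩
      have hhalf := rho_succ pf (m / 2)
      rw [ih (m / 2 + 1) (by omega) (by omega), ih (m / 2) (by omega) (by omega)] at hhalf
      rw [rho_succ, ih m (by omega) (by omega), ncard_rightSpecialFactors_pf_half (by omega)]
      omega

lemma injOn_tortoise_iterate_two_of_le {x : ℕ → Bool} {m n : ℕ} (hmn : m ≤ n)
    (hcount : ∀ w ∈ factorSet x m, 2 ≤ w.count true)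
    (hinj : InjOn tortoise^[2] (factorSet x m)) : InjOn tortoise^[2] (factorSet x n) := by
  intro w hw v hv h
  have hw' := take_mem_factorSet hw hmn
  have hv' := take_mem_factorSet hv hmn
  rw [← w.take_append_drop m, ← v.take_append_drop m] at h ⊢
  obtain ⟨ht, hd⟩ := tortoise_iterate_two_append_inj (hcount _ hw') (hcount _ hv')
    (by rw [hw'.1, hv'.1]) h
  rw [hinj hw' hv' ht, hd]

lemma injOn_tortoise_iterate_two_pf {n : ℕ} (hn : 13 ≤ n) :
    InjOn tortoise^[2] (factorSet pf n) := by
  have hcount : ∀ w ∈ pfFactors 4 13, 2 ≤ w.count true := by decide +kernel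
  have hcard : ((pfFactors 4 13).image tortoise^[2]).card = (pfFactors 4 13).card := by
    decide +kernel
  refine injOn_tortoise_iterate_two_of_le hn ?_ ?_ <;>
    rw [factorSet_pf_eq_pfFactors (K := 4) (by norm_num)]
  · exact hcount
  · exact Finset.injOn_of_card_image_eq hcard

/-- for all `n ≥ 13`, the 2-tortoise complexity of the paperfolding
word satisfies `ρ^{t(2)}_f(n) = 4n`. -/
theorem stmt_6 (n : ℕ) (hn : 13 ≤ n) : rhoTortK 2 pf n = 4 * n := by
  rw [rhoTortK, (injOn_tortoise_iterate_two_pf hn).ncard_image]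
  exact rho_pf (by omega)
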